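/- arXiv:2003.06338 — 4 statements merged into one kernel-verified Lean document; each statement's English description precedes it below -/
import Mathlib

section
/- For any bijection φ : ℕ → ℚ, there is no real number ξ such that F_φ is differentiable at ξ with F_φ'(ξ) ≠ 0. -/
noncomputable def Fphi (φ : ℕ → ℚ) (x : ℝ) : ℝ :=
  ∑' n : ℕ, if (φ n : ℝ) < x then ((1:ℝ)/2) ^ n else 0

lemma Fphi_summable (p : ℕ → Prop) [DecidablePred p] :
    Summable (fun n : ℕ => if p n then ((1:ℝ)/2) ^ n else 0) := by
  classical
  apply Summable.of_nonneg_of_le (fun n => ?_) (fun n => ?_)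
    (summable_geometric_of_lt_one (by norm_num) (by norm_num : (1:ℝ)/2 < 1))
  · split_ifs <;> positivity
  · split_ifs
    · exact le_refl _
    · positivity

lemma Fphi_split (φ : ℕ → ℚ) (a b : ℝ) (hab : a ≤ b) :
    Fphi φ b = Fphi φ a +
      ∑' n : ℕ, if a ≤ (φ n : ℝ) ∧ (φ n : ℝ) < b then ((1:ℝ)/2) ^ n else 0 := by
  classical
  simp only [Fphi]
  rw [← Summable.tsum_add (Fphi_summable (fun n => (φ n : ℝ) < a))
    (Fphi_summable (fun n => a ≤ (φ n : ℝ) ∧ (φ n : ℝ) < b))]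
  apply tsum_congr
  intro n
  by_cases h1 : (φ n : ℝ) < a
  · rw [if_pos (lt_of_lt_of_le h1 hab), if_pos h1, if_neg (by push_neg; intro h; linarith)]
    ring
  · rw [if_neg h1]
    by_cases h2 : (φ n : ℝ) < b
    · rw [if_pos h2, if_pos ⟨le_of_not_gt h1, h2⟩]; ring
    · rw [if_neg h2, if_neg (by push_neg; intro _; exact le_of_not_gt h2)]; ring

lemma Fphi_jump_le (φ : ℕ → ℚ) (a b : ℝ) (m : ℕ)
    (ha : a ≤ (φ m : ℝ)) (hb : (φ m : ℝ) < b) :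
    ((1:ℝ)/2) ^ m ≤ Fphi φ b - Fphi φ a := by
  classical
  have hab : a ≤ b := le_trans ha hb.le
  rw [Fphi_split φ a b hab]
  have hle : ((1:ℝ)/2) ^ m ≤
      ∑' n : ℕ, if a ≤ (φ n : ℝ) ∧ (φ n : ℝ) < b then ((1:ℝ)/2) ^ n else 0 := by
    have := Summable.le_tsum (Fphi_summable (fun n => a ≤ (φ n : ℝ) ∧ (φ n : ℝ) < b)) m
      (fun n _ => by split_ifs <;> positivity)
    simpa [if_pos (⟨ha, hb⟩ : a ≤ (φ m : ℝ) ∧ (φ m : ℝ) < b)] using this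
  linarith

lemma Fphi_mono (φ : ℕ → ℚ) : Monotone (Fphi φ) := by
  intro a b hab
  rw [Fphi_split φ a b hab]
  have : (0:ℝ) ≤ ∑' n : ℕ, if a ≤ (φ n : ℝ) ∧ (φ n : ℝ) < b then ((1:ℝ)/2) ^ n else 0 :=
    tsum_nonneg (fun n => by split_ifs <;> positivity)
  linarith

set_option maxHeartbeats 2000000 in
theorem stmt2 (φ : ℕ → ℚ) (hφ : Function.Bijective φ) :
    ¬ ∃ (ξ d : ℝ), d ≠ 0 ∧ HasDerivAt (Fphi φ) d ξ := by
  classical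
  rintro ⟨ξ, d, hd, hF⟩
  -- quantitative derivative bound
  have key : ∀ c : ℝ, 0 < c → ∃ δ > 0, ∀ x : ℝ, |x - ξ| < δ →
      |Fphi φ x - Fphi φ ξ - d * (x - ξ)| ≤ c * |x - ξ| := by
    intro c hc
    have h1 := hasDerivAt_iff_isLittleO.mp hF
    have h2 := (Asymptotics.isLittleO_iff.mp h1) hc
    rw [Metric.eventually_nhds_iff] at h2
    obtain ⟨δ, hδ, h3⟩ := h2
    refine ⟨δ, hδ, fun x hx => ?_⟩
    have := h3 (show dist x ξ < δ by simpa [Real.dist_eq] using hx)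
    simpa [Real.norm_eq_abs, smul_eq_mul, mul_comm] using this
  by_cases hrat : ∃ m : ℕ, (φ m : ℝ) = ξ
  · -- ξ is rational: jump at ξ contradicts continuity
    obtain ⟨m, hm⟩ := hrat
    obtain ⟨δ, hδ, hb⟩ := key 1 one_pos
    set h : ℝ := min (δ/2) (((1:ℝ)/2)^m / (2*(|d|+1))) with hh
    have hdpos : (0:ℝ) < |d| + 1 := by positivity
    have hhpos : 0 < h := by
      apply lt_min (by linarith)
      positivity
    have h1 : h ≤ δ/2 := min_le_left _ _
    have h2 : h ≤ ((1:ℝ)/2)^m / (2*(|d|+1)) := min_le_right _ _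
    have hjump : ((1:ℝ)/2)^m ≤ Fphi φ (ξ + h) - Fphi φ ξ :=
      Fphi_jump_le φ ξ (ξ + h) m (le_of_eq hm.symm) (by rw [hm]; linarith)
    have hbd := hb (ξ + h) (by rw [show ξ + h - ξ = h by ring, abs_of_pos hhpos]; linarith)
    rw [show ξ + h - ξ = h by ring, abs_of_pos hhpos] at hbd
    have habs : Fphi φ (ξ + h) - Fphi φ ξ ≤ d * h + h := by
      have := abs_le.mp hbd
      linarith [this.2]
    have hdh : d * h ≤ |d| * h := mul_le_mul_of_nonneg_right (le_abs_self d) hhpos.le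
    have : ((1:ℝ)/2)^m ≤ (|d| + 1) * h := by nlinarith
    have : ((1:ℝ)/2)^m ≤ (|d| + 1) * (((1:ℝ)/2)^m / (2*(|d|+1))) := by
      calc ((1:ℝ)/2)^m ≤ (|d| + 1) * h := this
        _ ≤ _ := mul_le_mul_of_nonneg_left h2 hdpos.le
    have hpow : (0:ℝ) < ((1:ℝ)/2)^m := by positivity
    have heq2 : (|d| + 1) * (((1:ℝ)/2)^m / (2*(|d|+1))) = ((1:ℝ)/2)^m / 2 := by
      have hne : |d| + 1 ≠ 0 := hdpos.ne'
      field_simp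
    rw [heq2] at this
    linarith
  · push_neg at hrat
    rcases lt_trichotomy d 0 with hdneg | hdz | hdpos
    · -- d < 0 contradicts monotonicity
      obtain ⟨δ, hδ, hb⟩ := key (-d/2) (by linarith)
      set h : ℝ := δ/2 with hh
      have hhpos : 0 < h := by positivity
      have hbd := hb (ξ + h) (by rw [show ξ + h - ξ = h by ring, abs_of_pos hhpos]; linarith)
      rw [show ξ + h - ξ = h by ring, abs_of_pos hhpos] at hbd
      have hmono : Fphi φ ξ ≤ Fphi φ (ξ + h) := Fphi_mono φ (by linarith)
      have := abs_le.mp hbd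
      nlinarith [this.2]
    · exact hd hdz
    · -- main case : d > 0
      obtain ⟨δ, hδ, hb⟩ := key (d/32) (by linarith)
      set h : ℝ := δ/4 with hh
      have hhpos : 0 < h := by positivity
      -- lower bound on increment
      have hbd := hb (ξ + h) (by rw [show ξ + h - ξ = h by ring, abs_of_pos hhpos]; linarith)
      rw [show ξ + h - ξ = h by ring, abs_of_pos hhpos] at hbd
      have hlow : d/2 * h ≤ Fphi φ (ξ + h) - Fphi φ ξ := by
        have := abs_le.mp hbd
        nlinarith [this.1]
      -- the increment is the sum of jumps
      have hsplit := Fphi_split φ ξ (ξ + h) (by linarith)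
      set J : ℝ := ∑' n : ℕ, if ξ ≤ (φ n : ℝ) ∧ (φ n : ℝ) < ξ + h then ((1:ℝ)/2) ^ n else 0
        with hJ
      have hJlow : d/2 * h ≤ J := by rw [hsplit] at hlow; linarith
      have hJpos : 0 < J := lt_of_lt_of_le (by positivity) hJlow
      -- the set of jumping indices is nonempty
      have hne : ∃ n : ℕ, ξ ≤ (φ n : ℝ) ∧ (φ n : ℝ) < ξ + h := by
        by_contra hcon
        push_neg at hcon
        have : J = 0 := by
          rw [hJ]
          convert tsum_zero with n
          rw [if_neg]
          intro ⟨h1, h2⟩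
          exact absurd h2 (not_lt.mpr (hcon n h1))
        linarith
      set m : ℕ := sInf {n : ℕ | ξ ≤ (φ n : ℝ) ∧ (φ n : ℝ) < ξ + h} with hmdef
      have hmmem : ξ ≤ (φ m : ℝ) ∧ (φ m : ℝ) < ξ + h := Nat.sInf_mem hne
      -- upper bound J ≤ 2 * (1/2)^m
      have hJup : J ≤ 2 * ((1:ℝ)/2)^m := by
        have hle : J ≤ ∑' n : ℕ, if m ≤ n then ((1:ℝ)/2)^n else 0 := by
          apply Summable.tsum_le_tsum _ (Fphi_summable _) (Fphi_summable _)
          intro n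
          by_cases hp : ξ ≤ (φ n : ℝ) ∧ (φ n : ℝ) < ξ + h
          · rw [if_pos hp, if_pos (Nat.sInf_le hp)]
          · rw [if_neg hp]
            split_ifs <;> positivity
        have heq : ∑' n : ℕ, (if m ≤ n then ((1:ℝ)/2)^n else 0) = 2 * ((1:ℝ)/2)^m := by
          have hinj : Function.Injective (fun n : ℕ => n + m) := fun a b hab => by
            simpa using hab
          have hzero : Function.support (fun x : ℕ => if m ≤ x then ((1:ℝ)/2)^x else 0)
              ⊆ Set.range (fun n : ℕ => n + m) := by
            intro x hx
            by_cases hmx : m ≤ x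
            · exact ⟨x - m, by show x - m + m = x; omega⟩
            · exact absurd (by rw [if_neg hmx] : (if m ≤ x then ((1:ℝ)/2)^x else 0) = 0) hx
          rw [← hinj.tsum_eq hzero]
          have : ∀ n : ℕ, (if m ≤ n + m then ((1:ℝ)/2)^(n+m) else 0)
              = ((1:ℝ)/2)^n * ((1:ℝ)/2)^m := by
            intro n
            rw [if_pos (by omega), pow_add]
          rw [tsum_congr this, tsum_mul_right,
            tsum_geometric_of_lt_one (by norm_num) (by norm_num)]
          norm_num
          try ring
        linarith [hle, le_of_eq heq]
      have hjm : d/4 * h ≤ ((1:ℝ)/2)^m := by linarith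
      -- now the jump at q := φ m is too big
      obtain ⟨q, hqdef⟩ : ∃ q : ℝ, q = (φ m : ℝ) := ⟨_, rfl⟩
      have hqgt : ξ < q := hqdef ▸ lt_of_le_of_ne hmmem.1 (fun he => hrat m he.symm)
      have hqlt : q < ξ + h := hqdef ▸ hmmem.2
      obtain ⟨b, hbdef⟩ : ∃ b : ℝ, b = q + h/32 := ⟨_, rfl⟩
      have hjup : ((1:ℝ)/2)^m ≤ Fphi φ b - Fphi φ q :=
        Fphi_jump_le φ q b m (le_of_eq hqdef) (by rw [hbdef, ← hqdef]; linarith)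
      have hbgt : ξ < b := by rw [hbdef]; linarith
      have hbb := hb b (by rw [abs_of_pos (by linarith : (0:ℝ) < b - ξ)]
                           rw [hbdef]; linarith)
      have hbq := hb q (by rw [abs_of_pos (by linarith : (0:ℝ) < q - ξ)]; linarith)
      rw [abs_of_pos (by linarith : (0:ℝ) < b - ξ)] at hbb
      rw [abs_of_pos (by linarith : (0:ℝ) < q - ξ)] at hbq
      have h1 := abs_le.mp hbb
      have h2 := abs_le.mp hbq
      -- F b - F q ≤ d*(b-q) + c*(b-ξ) + c*(q-ξ)
      have hup : Fphi φ b - Fphi φ q ≤ d * (b - q) + d/32 * (b - ξ) + d/32 * (q - ξ) := by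
        nlinarith [h1.2, h2.1]
      have hbq' : b - q = h/32 := by rw [hbdef]; ring
      have hbξ : b - ξ ≤ 2 * h := by rw [hbdef]; nlinarith
      have hqξ : q - ξ ≤ h := by linarith
      rw [hbq'] at hup
      have hd32 : (0:ℝ) ≤ d/32 := by linarith
      have t1 : d/32 * (b - ξ) ≤ d/32 * (2 * h) := by
        apply mul_le_mul_of_nonneg_left hbξ hd32
      have t2 : d/32 * (q - ξ) ≤ d/32 * h := by
        apply mul_le_mul_of_nonneg_left hqξ hd32
      have hdh : 0 < d * h := mul_pos hdpos hhpos
      clear_value h J m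
      clear hb key hF hbd hlow hsplit hJ hJlow hJpos hne hmdef hmmem hJup hbb hbq h1 h2 hd hφ
      generalize hX : Fphi φ b - Fphi φ q = X at hjup hup
      generalize hP : ((1:ℝ)/2)^m = P at hjm hjup
      linarith [hjm, hjup, hup, t1, t2, hdh]
end

section
/- For any bijection φ : ℕ → ℚ, the function G_φ(x) = Σ_{n : φ(n) < x} n^(-2) has derivative 0 at almost every real number (with respect to Lebesgue measure). -/
noncomputable def Gphi (φ : ℕ+ → ℚ) (x : ℝ) : ℝ :=
  ∑' n : ℕ+, if (φ n : ℝ) < x then 1 / ((n : ℕ) : ℝ) ^ 2 else 0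

/-!
A monotone function is differentiable almost everywhere, with derivative the Radon–Nikodym
derivative of its Stieltjes measure with respect to Lebesgue measure. The Stieltjes measure of
the saltus function `x ↦ ∑_{a i < x} c i` is the sum of point masses `∑ c i • δ (a i)`; when
there are countably many jumps it is carried by a countable set, hence singular, and the
derivative vanishes almost everywhere.
-/

open MeasureTheory Filter Set Topology

theorem Monotone.ae_hasDerivAt_zero_of_mutuallySingular {f : ℝ → ℝ} (hf : Monotone f)
    (h : hf.stieltjesFunction.measure ⟂ₘ volume) : ∀ᵐ x, HasDerivAt f 0 x := by
  filter_upwards [hf.ae_hasDerivAt, h.rnDeriv_ae_eq_zero] with x hx h0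
  simpa [h0] using hx

noncomputable def saltus {ι : Type*} (a c : ι → ℝ) (x : ℝ) : ℝ :=
  ∑' i, if a i < x then c i else 0

section Saltus

variable {ι : Type*} (a : ι → ℝ) {c : ι → ℝ}

theorem Summable.ite_zero (hc : Summable c) (p : ι → Prop) [DecidablePred p] :
    Summable fun i => if p i then c i else 0 :=
  (hc.indicator {i | p i}).congr fun i => by simp [Set.indicator_apply]

theorem monotone_saltus (hc0 : ∀ i, 0 ≤ c i) (hc : Summable c) : Monotone (saltus a c) := by
  intro x y hxy
  refine (hc.ite_zero _).tsum_le_tsum (fun i => ?_) (hc.ite_zero _)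
  split_ifs with hx hy hy
  · rfl
  · exact absurd (hx.trans_le hxy) hy
  · exact hc0 i
  · rfl

theorem tendsto_saltus_nhdsGT (hc0 : ∀ i, 0 ≤ c i) (hc : Summable c) (x : ℝ) :
    Tendsto (saltus a c) (𝓝[>] x) (𝓝 (∑' i, if a i ≤ x then c i else 0)) := by
  -- Tannery's theorem: each term is eventually constant as `y ↓ x` and is dominated by `c i`.
  refine tendsto_tsum_of_dominated_convergence hc (fun i => ?_) (.of_forall fun y i => ?_)
  · refine tendsto_const_nhds.congr' ?_
    rcases le_or_gt (a i) x with hax | hxa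
    · filter_upwards [self_mem_nhdsWithin] with y hy
      simp [hax, hax.trans_lt hy]
    · filter_upwards [Ioo_mem_nhdsGT hxa] with y hy
      simp [hxa.not_ge, hy.2.not_gt]
  · split_ifs <;> simp [abs_of_nonneg, hc0 i]

theorem rightLim_saltus (hc0 : ∀ i, 0 ≤ c i) (hc : Summable c) (x : ℝ) :
    Function.rightLim (saltus a c) x = ∑' i, if a i ≤ x then c i else 0 :=
  rightLim_eq_of_tendsto (tendsto_saltus_nhdsGT a hc0 hc x)

theorem saltus_stieltjesFunction_measure_eq_sum_dirac (hc0 : ∀ i, 0 ≤ c i) (hc : Summable c) :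
    (monotone_saltus a hc0 hc).stieltjesFunction.measure =
      Measure.sum fun i => ENNReal.ofReal (c i) • Measure.dirac (a i) := by
  refine Measure.ext_of_Ioc' _ _ (fun _ _ _ => measure_Ioc_lt_top.ne) fun x y hxy => ?_
  have hsub : (∑' i, if a i ≤ y then c i else 0) - (∑' i, if a i ≤ x then c i else 0) =
      ∑' i, if a i ∈ Ioc x y then c i else 0 := by
    rw [← (hc.ite_zero _).tsum_sub (hc.ite_zero _)]
    refine tsum_congr fun i => ?_
    by_cases hx : a i ≤ x
    · simp [hx, hx.trans hxy.le]
    · simp [hx, lt_of_not_ge hx]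
  rw [StieltjesFunction.measure_Ioc, Monotone.stieltjesFunction_eq,
    Monotone.stieltjesFunction_eq, rightLim_saltus a hc0 hc, rightLim_saltus a hc0 hc, hsub,
    ENNReal.ofReal_tsum_of_nonneg (fun i => by split_ifs <;> simp [hc0 i]) (hc.ite_zero _),
    Measure.sum_apply _ measurableSet_Ioc]
  refine tsum_congr fun i => ?_
  simp only [Measure.smul_apply, Measure.dirac_apply' _ measurableSet_Ioc, Set.indicator_apply,
    Pi.one_apply, smul_eq_mul]
  split_ifs <;> simp

theorem ae_hasDerivAt_saltus_eq_zero [Countable ι] (hc0 : ∀ i, 0 ≤ c i) (hc : Summable c) :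
    ∀ᵐ x, HasDerivAt (saltus a c) 0 x := by
  refine (monotone_saltus a hc0 hc).ae_hasDerivAt_zero_of_mutuallySingular ?_
  rw [saltus_stieltjesFunction_measure_eq_sum_dirac a hc0 hc]
  exact Measure.MutuallySingular.sum_left.2 fun i => (mutuallySingular_dirac _ _).smul _

end Saltus

theorem stmt4_general (φ : ℕ+ → ℚ) :
    ∀ᵐ x : ℝ ∂MeasureTheory.volume, HasDerivAt (Gphi φ) 0 x :=
  ae_hasDerivAt_saltus_eq_zero (fun n => (φ n : ℝ)) (fun n => by positivity)
    ((Real.summable_one_div_nat_pow.2 one_lt_two).comp_injective PNat.coe_injective)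

theorem stmt4 (φ : ℕ+ → ℚ) (hφ : Function.Bijective φ) :
    ∀ᵐ x : ℝ ∂MeasureTheory.volume, HasDerivAt (Gphi φ) 0 x :=
  stmt4_general φ
end

section
/- There exists a strictly increasing function f : ℝ → ℝ such that f'(x) = 2^x for every rational x and f'(x) = 0 for Lebesgue-almost every irrational x. -/
/-!
Enumerate `ℚ` and put around each rational `r` a cluster of point masses at `r ± t / (j + 1)`,
the pair at distance `t / (j + 1)` weighing `2 ^ r * (t / (j + 1) - t / (j + 2))` each. On either
side of `r` the cluster's mass within distance `h` is `2 ^ r * h` up to an error `O(h² / t)`, so its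
distribution function has derivative `2 ^ r` at `r`. The scale `t = t_r` is irrational, so no
rational is an atom, and so small that the cluster of `r` is light compared with its distance to
every rational enumerated before `r`: near a rational `r₀` the other clusters then contribute
`o(h)` (dominated convergence for series). The sum of all clusters is a finite purely atomic measure
charging every interval, so its distribution function `f` is strictly increasing, and since the
measure is singular, `f' = 0` almost everywhere.
-/

open MeasureTheory Filter Topology Set Metric Encodable
open scoped ENNReal

lemma hasSum_ite_le_sub_succ {g : ℕ → ℝ} (hg : Antitone g) (hlim : Tendsto g atTop (𝓝 0))
    (k : ℕ) : HasSum (fun j => if k ≤ j then g j - g (j + 1) else 0) (g k) := by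
  rw [← hasSum_nat_add_iff' k, Finset.sum_eq_zero fun j hj => if_neg (by simpa using hj),
    sub_zero]
  simp only [le_add_iff_nonneg_left, zero_le, if_true]
  rw [hasSum_iff_tendsto_nat_of_nonneg fun j => sub_nonneg.2 (hg (by omega))]
  have htel (n : ℕ) : ∑ i ∈ Finset.range n, (g (i + k) - g (i + k + 1)) = g k - g (n + k) := by
    simpa [add_right_comm _ 1 k] using Finset.sum_range_sub' (fun j => g (j + k)) n
  simp_rw [htel]
  simpa using tendsto_const_nhds.sub (hlim.comp (tendsto_add_atTop_nat k))

lemma div_add_one_mem_Icc {t h : ℝ} {k : ℕ} (ht : 0 < t) (hh : 0 < h) (hk₁ : t / h ≤ k + 1)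
    (hk₂ : k ≤ t / h) : t / (k + 1) ∈ Icc (t / (t + h) * h) h := by
  rw [div_le_iff₀ hh] at hk₁
  rw [le_div_iff₀ hh] at hk₂
  constructor
  · rw [div_mul_eq_mul_div, div_le_div_iff₀ (by positivity) (by positivity)]
    nlinarith
  · rw [div_le_iff₀ (by positivity)]
    linarith

lemma tendsto_div_of_mem_Icc {m : ℝ → ℝ} {c t : ℝ} (ht : 0 < t)
    (hm : ∀ h > 0, m h ∈ Icc (c * (t / (t + h) * h)) (c * h)) :
    Tendsto (fun h => m h / h) (𝓝[>] 0) (𝓝 c) := by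
  have hlow : Tendsto (fun h => c * (t / (t + h))) (𝓝[>] 0) (𝓝 c) := by
    have := (tendsto_const_nhds (x := t)).div (tendsto_const_nhds.add (tendsto_id (x := 𝓝 (0 : ℝ))))
      (by simpa using ht.ne')
    simpa [ht.ne'] using (this.const_mul c).mono_left nhdsWithin_le_nhds
  refine tendsto_of_tendsto_of_tendsto_of_le_of_le' hlow tendsto_const_nhds ?_ ?_ <;>
    filter_upwards [self_mem_nhdsWithin] with h (hh : 0 < h)
  · rw [le_div_iff₀ hh, mul_assoc]; exact (hm h hh).1
  · rw [div_le_iff₀ hh]; exact (hm h hh).2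

lemma exists_irrational_pos_of_eventually {p : ℝ → Prop} (h : ∀ᶠ t in 𝓝 0, p t) :
    ∃ t, Irrational t ∧ 0 < t ∧ p t := by
  obtain ⟨ε, hε, hp⟩ := Metric.eventually_nhds_iff.1 h
  obtain ⟨t, ht, ht0, htε⟩ := exists_irrational_btwn hε
  exact ⟨t, ht, ht0, hp (by rwa [Real.dist_eq, sub_zero, abs_of_pos ht0])⟩

lemma measureReal_Iic_sub_Iic {μ : Measure ℝ} [IsFiniteMeasure μ] {a b : ℝ} (hab : a ≤ b) :
    μ.real (Iic b) - μ.real (Iic a) = μ.real (Ioc a b) := by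
  rw [← Iic_union_Ioc_eq_Iic hab, measureReal_union (Iic_disjoint_Ioc le_rfl) measurableSet_Ioc]
  ring

lemma hasDerivAt_measureReal_Iic {μ : Measure ℝ} [IsFiniteMeasure μ] {x c : ℝ}
    (hR : Tendsto (fun h => μ.real (Ioc x (x + h)) / h) (𝓝[>] 0) (𝓝 c))
    (hL : Tendsto (fun h => μ.real (Ioc (x - h) x) / h) (𝓝[>] 0) (𝓝 c)) :
    HasDerivAt (fun y => μ.real (Iic y)) c x := by
  rw [hasDerivAt_iff_tendsto_slope_zero, ← nhdsLT_sup_nhdsGT, tendsto_sup]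
  constructor
  · have hL' := hL.comp (neg_zero (G := ℝ) ▸ tendsto_neg_nhdsLT)
    refine hL'.congr' (eventually_nhdsWithin_of_forall fun h (hh : h < 0) => ?_)
    rw [Function.comp_apply, sub_neg_eq_add, ← measureReal_Iic_sub_Iic (by linarith)]
    simp only [smul_eq_mul]
    field_simp
    ring
  · refine hR.congr' (eventually_nhdsWithin_of_forall fun h (hh : 0 < h) => ?_)
    rw [← measureReal_Iic_sub_Iic (by linarith)]
    simp only [smul_eq_mul, inv_mul_eq_div]

lemma ae_hasDerivAt_measureReal_Iic_of_mutuallySingular {μ : Measure ℝ} [IsFiniteMeasure μ]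
    (hμ : μ ⟂ₘ volume) : ∀ᵐ x, HasDerivAt (fun y => μ.real (Iic y)) 0 x := by
  rcases eq_zero_or_neZero μ with rfl | _
  · simpa using ae_of_all _ fun x => hasDerivAt_const x (0 : ℝ)
  set ν := (μ univ)⁻¹ • μ
  have hF (y : ℝ) : μ.real (Iic y) = μ.real univ * ProbabilityTheory.cdf ν y := by
    rw [ProbabilityTheory.cdf_eq_real, measureReal_ennreal_smul_apply, ENNReal.toReal_inv,
      ← measureReal_def, mul_inv_cancel_left₀ measureReal_univ_ne_zero]
  filter_upwards [(ProbabilityTheory.cdf ν).ae_hasDerivAt, (hμ.smul _).rnDeriv_ae_eq_zero]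
    with x hx hx0
  rw [ProbabilityTheory.measure_cdf, hx0] at hx
  simpa [hF] using hx.const_mul (μ.real univ)

noncomputable def cluster (x c t : ℝ) : Measure ℝ :=
  Measure.sum fun j : ℕ => ENNReal.ofReal (c * (t / (j + 1) - t / (j + 2))) •
    (Measure.dirac (x - t / (j + 1)) + Measure.dirac (x + t / (j + 1)))

def clusterSupport (x t : ℝ) : Set ℝ :=
  insert x (range (fun j : ℕ => x - t / (j + 1)) ∪ range (fun j : ℕ => x + t / (j + 1)))

section Cluster

variable {x c t : ℝ}

lemma cluster_apply (s : Set ℝ) : cluster x c t s = ∑' j : ℕ,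
    ENNReal.ofReal (c * (t / (j + 1) - t / (j + 2))) *
      (s.indicator 1 (x - t / (j + 1)) + s.indicator 1 (x + t / (j + 1))) := by
  simp [cluster, Measure.sum_apply_of_countable, Measure.dirac_apply, mul_add]

lemma tsum_ite_le_ofReal_mul_div_sub_div (hc : 0 ≤ c) (ht : 0 ≤ t) (k : ℕ) :
    ∑' j : ℕ, (if k ≤ j then ENNReal.ofReal (c * (t / (j + 1) - t / (j + 2))) else 0) =
      ENNReal.ofReal (c * (t / (k + 1))) := by
  have hanti : Antitone fun j : ℕ => c * (t / (j + 1)) := fun i j hij =>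
    mul_le_mul_of_nonneg_left (div_le_div_of_nonneg_left ht (by positivity) (by simpa)) hc
  have hlim : Tendsto (fun j : ℕ => c * (t / (j + 1))) atTop (𝓝 0) := by
    simpa using (tendsto_const_nhds.div_atTop (tendsto_atTop_add_const_right _ 1
      tendsto_natCast_atTop_atTop)).const_mul c
  have hsum := hasSum_ite_le_sub_succ hanti hlim k
  rw [← hsum.tsum_eq, ENNReal.ofReal_tsum_of_nonneg _ hsum.summable]
  · congr 1 with j
    split_ifs
    · push_cast; ring_nf
    · simp
  · intro j
    split_ifs
    · exact sub_nonneg.2 (hanti j.le_succ)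
    · exact le_rfl

-- `hs`: `s` holds exactly one atom of the pair at distance `t / (j + 1)` if `k ≤ j`, none otherwise
lemma cluster_real_mem_Icc {s : Set ℝ} {h : ℝ} {k : ℕ} (hc : 0 ≤ c) (ht : 0 < t) (hh : 0 < h)
    (hk₁ : t / h ≤ k + 1) (hk₂ : k ≤ t / h)
    (hs : ∀ j : ℕ, s.indicator 1 (x - t / (j + 1)) + s.indicator 1 (x + t / (j + 1)) =
      if k ≤ j then (1 : ℝ≥0∞) else 0) :
    (cluster x c t).real s ∈ Icc (c * (t / (t + h) * h)) (c * h) := by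
  have hmem := div_add_one_mem_Icc ht hh hk₁ hk₂
  rw [measureReal_def, cluster_apply]
  simp_rw [hs, mul_ite, mul_one, mul_zero]
  rw [tsum_ite_le_ofReal_mul_div_sub_div hc ht.le k, ENNReal.toReal_ofReal (by positivity)]
  exact ⟨mul_le_mul_of_nonneg_left hmem.1 hc, mul_le_mul_of_nonneg_left hmem.2 hc⟩

lemma cluster_real_Ioc_right_mem (hc : 0 ≤ c) (ht : 0 < t) {h : ℝ} (hh : 0 < h) :
    (cluster x c t).real (Ioc x (x + h)) ∈ Icc (c * (t / (t + h) * h)) (c * h) := by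
  have hceil : 1 ≤ ⌈t / h⌉₊ := Nat.one_le_iff_ne_zero.2 (Nat.ceil_pos.2 (by positivity)).ne'
  have hk : ((⌈t / h⌉₊ - 1 : ℕ) : ℝ) + 1 = ⌈t / h⌉₊ := by
    rw [Nat.cast_sub hceil]; ring
  refine cluster_real_mem_Icc hc ht hh (hk ▸ Nat.le_ceil _) ?_ fun j => ?_
  · have := Nat.ceil_lt_add_one (div_pos ht hh).le
    linarith
  have hj : 0 < t / (j + 1) := by positivity
  have hiff : x + t / (j + 1) ∈ Ioc x (x + h) ↔ ⌈t / h⌉₊ - 1 ≤ j := by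
    rw [mem_Ioc, Nat.sub_le_iff_le_add, Nat.ceil_le, div_le_iff₀ hh, ← div_le_iff₀' (by positivity)]
    push_cast
    constructor
    · exact fun h' => by linarith [h'.2]
    · exact fun h' => ⟨by linarith, by linarith⟩
  have hout : x - t / (j + 1) ∉ Ioc x (x + h) := fun hm => by linarith [hm.1]
  rw [indicator_of_notMem hout, zero_add, indicator_apply, if_congr hiff rfl rfl, Pi.one_apply]

lemma cluster_real_Ioc_left_mem (hc : 0 ≤ c) (ht : 0 < t) {h : ℝ} (hh : 0 < h) :
    (cluster x c t).real (Ioc (x - h) x) ∈ Icc (c * (t / (t + h) * h)) (c * h) := by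
  refine cluster_real_mem_Icc hc ht hh (Nat.lt_floor_add_one _).le (Nat.floor_le (by positivity))
    fun j => ?_
  have hj : 0 < t / (j + 1) := by positivity
  have hiff : x - t / (j + 1) ∈ Ioc (x - h) x ↔ ⌊t / h⌋₊ ≤ j := by
    rw [mem_Ioc, ← Nat.lt_add_one_iff, Nat.floor_lt (by positivity), div_lt_iff₀ hh,
      ← div_lt_iff₀' (by positivity)]
    push_cast
    constructor
    · exact fun h' => by linarith [h'.1]
    · exact fun h' => ⟨by linarith, by linarith⟩
  have hout : x + t / (j + 1) ∉ Ioc (x - h) x := fun hm => by linarith [hm.2]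
  rw [indicator_of_notMem hout, add_zero, indicator_apply, if_congr hiff rfl rfl, Pi.one_apply]

lemma cluster_univ (hc : 0 ≤ c) (ht : 0 ≤ t) : cluster x c t univ = ENNReal.ofReal (2 * c * t) := by
  have h2 : ENNReal.ofReal (2 * c * t) = 2 * ENNReal.ofReal (c * (t / ((0 : ℕ) + 1))) := by
    rw [← ENNReal.ofReal_ofNat 2, ← ENNReal.ofReal_mul zero_le_two]; ring_nf
  rw [cluster_apply, h2, ← tsum_ite_le_ofReal_mul_div_sub_div hc ht 0, ← ENNReal.tsum_mul_left]
  congr 1 with j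
  simp [mul_comm, one_add_one_eq_two]

lemma cluster_real_le (hc : 0 ≤ c) (ht : 0 ≤ t) (s : Set ℝ) : (cluster x c t).real s ≤ 2 * c * t :=
  ENNReal.toReal_le_of_le_ofReal (by positivity) ((measure_mono (subset_univ s)).trans
    (cluster_univ hc ht).le)

lemma cluster_compl_clusterSupport : cluster x c t (clusterSupport x t)ᶜ = 0 := by
  rw [cluster_apply]
  refine ENNReal.tsum_eq_zero.2 fun j => ?_
  simp [clusterSupport]

lemma cluster_eq_zero_of_disjoint {s : Set ℝ} (hs : Disjoint s (clusterSupport x t)) :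
    cluster x c t s = 0 :=
  measure_mono_null hs.subset_compl_right cluster_compl_clusterSupport

lemma countable_clusterSupport : (clusterSupport x t).Countable :=
  ((countable_range _).union (countable_range _)).insert x

lemma isClosed_clusterSupport : IsClosed (clusterSupport x t) := by
  have hlim (σ : ℝ) : Tendsto (fun j : ℕ => x + σ * (t / (j + 1))) atTop (𝓝 x) := by
    simpa using tendsto_const_nhds.add ((tendsto_const_nhds.div_atTop
      (tendsto_atTop_add_const_right _ 1 tendsto_natCast_atTop_atTop)).const_mul σ)
  have h := ((hlim (-1)).isCompact_insert_range.union (hlim 1).isCompact_insert_range).isClosed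
  convert h using 1
  simp [clusterSupport, insert_union_distrib, sub_eq_add_neg]

lemma clusterSupport_subset_closedBall (ht : 0 ≤ t) : clusterSupport x t ⊆ closedBall x t := by
  have hj (j : ℕ) : |t / (j + 1)| ≤ t := by
    rw [abs_of_nonneg (by positivity)]
    exact div_le_self ht (by linarith [j.cast_nonneg (α := ℝ)])
  rintro _ (rfl | ⟨j, rfl⟩ | ⟨j, rfl⟩) <;> simp [dist_eq_norm, ← abs_div, hj, ht]

lemma eventually_cluster_closedBall_eq_zero {y : ℝ} (hy : y ∉ clusterSupport x t) :
    ∀ᶠ h in 𝓝 0, cluster x c t (closedBall y h) = 0 :=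
  (eventually_closedBall_subset (isClosed_clusterSupport.isOpen_compl.mem_nhds hy)).mono
    fun _ hsub => cluster_eq_zero_of_disjoint (disjoint_compl_left.mono_left hsub)

lemma cluster_mutuallySingular_volume : cluster x c t ⟂ₘ volume :=
  ⟨(clusterSupport x t)ᶜ, isClosed_clusterSupport.isOpen_compl.measurableSet,
    cluster_compl_clusterSupport, by simpa using countable_clusterSupport.measure_zero volume⟩

end Cluster

lemma exists_clusterScale (r : ℚ) :
    ∃ t : ℝ, Irrational t ∧ 0 < t ∧ 2 * 2 ^ (r : ℝ) * t ≤ 2⁻¹ ^ encode r ∧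
      ∀ r' : ℚ, encode r' < encode r →
        2 * t ≤ |(r : ℝ) - r'| ∧ 2 * 2 ^ (r : ℝ) * t ≤ 2⁻¹ ^ encode r * |(r : ℝ) - r'| := by
  have hsmall (k : ℝ) {b : ℝ} (hb : 0 < b) : ∀ᶠ t in 𝓝 (0 : ℝ), k * t ≤ b :=
    ((continuous_const_mul k).tendsto' 0 0 (mul_zero k)).eventually_le_const hb
  have hfin : {r' : ℚ | encode r' < encode r}.Finite :=
    (finite_Iio _).preimage encode_injective.injOn
  refine exists_irrational_pos_of_eventually <|
    (hsmall _ (by positivity)).and <| (eventually_all_finite hfin).2 fun r' hr' => ?_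
  have hne : 0 < |(r : ℝ) - r'| :=
    abs_pos.2 (sub_ne_zero.2 (Rat.cast_injective.ne fun h => ne_of_gt hr' (congrArg encode h)))
  exact (hsmall 2 hne).and (hsmall _ (by positivity))

noncomputable def clusterScale (r : ℚ) : ℝ := (exists_clusterScale r).choose

lemma clusterScale_irrational (r : ℚ) : Irrational (clusterScale r) :=
  (exists_clusterScale r).choose_spec.1

lemma clusterScale_pos (r : ℚ) : 0 < clusterScale r := (exists_clusterScale r).choose_spec.2.1

lemma two_mul_rpow_mul_clusterScale_le (r : ℚ) :
    2 * 2 ^ (r : ℝ) * clusterScale r ≤ 2⁻¹ ^ encode r :=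
  (exists_clusterScale r).choose_spec.2.2.1

lemma clusterScale_separated {r r' : ℚ} (h : encode r' < encode r) :
    2 * clusterScale r ≤ |(r : ℝ) - r'| ∧
      2 * 2 ^ (r : ℝ) * clusterScale r ≤ 2⁻¹ ^ encode r * |(r : ℝ) - r'| :=
  (exists_clusterScale r).choose_spec.2.2.2 r' h

noncomputable def ratCluster (r : ℚ) : Measure ℝ := cluster r (2 ^ (r : ℝ)) (clusterScale r)

noncomputable def ratClusterSum : Measure ℝ := Measure.sum ratCluster

lemma two_rpow_pos (r : ℚ) : (0 : ℝ) < 2 ^ (r : ℝ) := Real.rpow_pos_of_pos two_pos _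

instance : IsFiniteMeasure ratClusterSum := by
  have hsum : Summable fun n : ℕ => (2⁻¹ : ℝ) ^ n :=
    summable_geometric_of_lt_one (by norm_num) (by norm_num)
  refine ⟨calc ratClusterSum univ = ∑' r, ratCluster r univ := Measure.sum_apply _ .univ
    _ ≤ ∑' r, ENNReal.ofReal (2⁻¹ ^ encode r) := ENNReal.tsum_le_tsum fun r => ?_
    _ ≤ ∑' n : ℕ, ENNReal.ofReal (2⁻¹ ^ n) :=
      ENNReal.tsum_comp_le_tsum_of_injective encode_injective _
    _ < ⊤ := by
      rw [← ENNReal.ofReal_tsum_of_nonneg (fun n => by positivity) hsum]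
      exact ENNReal.ofReal_lt_top⟩
  rw [ratCluster, cluster_univ (two_rpow_pos r).le (clusterScale_pos r).le]
  exact ENNReal.ofReal_le_ofReal (two_mul_rpow_mul_clusterScale_le r)

instance (r : ℚ) : IsFiniteMeasure (ratCluster r) :=
  isFiniteMeasure_of_le ratClusterSum (Measure.le_sum ratCluster r)

lemma ratClusterSum_mutuallySingular_volume : ratClusterSum ⟂ₘ volume :=
  Measure.MutuallySingular.sum_left.2 fun _ => cluster_mutuallySingular_volume

lemma measureReal_ratClusterSum (s : Set ℝ) :
    ratClusterSum.real s = ∑' r, (ratCluster r).real s := by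
  rw [measureReal_def, ratClusterSum, Measure.sum_apply_of_countable, ENNReal.tsum_toReal_eq]
  · rfl
  · exact fun r => measure_ne_top _ s

lemma ratClusterSum_real_Ioc_pos {x y : ℝ} (hxy : x < y) : 0 < ratClusterSum.real (Ioc x y) := by
  obtain ⟨r, hxr, hry⟩ := exists_rat_btwn hxy
  have ht := clusterScale_pos r
  have hc := two_rpow_pos r
  have hh := sub_pos.2 hry
  have hlow := (cluster_real_Ioc_right_mem (x := r) hc.le ht hh).1
  rw [add_sub_cancel] at hlow
  have hpos : 0 < ratCluster r (Ioc r y) :=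
    (ENNReal.toReal_pos_iff.1 (lt_of_lt_of_le (by positivity) hlow)).1
  refine ENNReal.toReal_pos (ne_of_gt ?_) (measure_ne_top _ _)
  calc 0 < ratCluster r (Ioc r y) := hpos
    _ ≤ ratClusterSum (Ioc r y) := Measure.le_sum ratCluster r _
    _ ≤ ratClusterSum (Ioc x y) := measure_mono (Ioc_subset_Ioc_left hxr.le)

lemma ratCast_notMem_clusterSupport {r r₀ : ℚ} (hr : r ≠ r₀) :
    (r₀ : ℝ) ∉ clusterSupport r (clusterScale r) := by
  have hirr (j : ℕ) : Irrational (clusterScale r / (j + 1)) := by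
    exact_mod_cast (clusterScale_irrational r).div_natCast j.succ_ne_zero
  rintro (h | ⟨j, h⟩ | ⟨j, h⟩)
  · exact hr (Rat.cast_injective h).symm
  · exact ((hirr j).ratCast_sub r).ne_rat r₀ h
  · exact ((hirr j).ratCast_add r).ne_rat r₀ h

lemma eventually_ratCluster_closedBall_eq_zero {r r₀ : ℚ} (hr : r ≠ r₀) :
    ∀ᶠ h in 𝓝[>] 0, ratCluster r (closedBall (r₀ : ℝ) h) = 0 :=
  (eventually_cluster_closedBall_eq_zero (ratCast_notMem_clusterSupport hr)).filter_mono
    nhdsWithin_le_nhds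

lemma ratCluster_real_closedBall_le {r r₀ : ℚ} (hr : encode r₀ < encode r) {h : ℝ} (hh : 0 < h) :
    (ratCluster r).real (closedBall (r₀ : ℝ) h) ≤ 2 * 2⁻¹ ^ encode r * h := by
  by_cases hd : Disjoint (closedBall (r₀ : ℝ) h) (clusterSupport r (clusterScale r))
  · rw [measureReal_def, ratCluster, cluster_eq_zero_of_disjoint hd, ENNReal.toReal_zero]
    positivity
  obtain ⟨p, hp₀, hp⟩ := not_disjoint_iff.1 hd
  have hpr := clusterSupport_subset_closedBall (clusterScale_pos r).le hp
  rw [mem_closedBall] at hp₀ hpr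
  obtain ⟨hsep, hmass⟩ := clusterScale_separated hr
  have hdist : |(r : ℝ) - r₀| ≤ 2 * h := by
    have := dist_triangle_left (r : ℝ) r₀ p
    rw [Real.dist_eq] at this
    linarith
  calc (ratCluster r).real (closedBall (r₀ : ℝ) h)
      ≤ 2 * 2 ^ (r : ℝ) * clusterScale r :=
        cluster_real_le (two_rpow_pos r).le (clusterScale_pos r).le _
    _ ≤ 2⁻¹ ^ encode r * |(r : ℝ) - r₀| := hmass
    _ ≤ 2 * 2⁻¹ ^ encode r * h := by nlinarith [pow_pos (by norm_num : (0 : ℝ) < 2⁻¹) (encode r)]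

lemma tendsto_ratClusterSum_slope (r₀ : ℚ) {I : ℝ → Set ℝ}
    (hI : ∀ h > 0, I h ⊆ closedBall (r₀ : ℝ) h)
    (hI₀ : ∀ h > 0, (ratCluster r₀).real (I h) ∈
      Icc (2 ^ (r₀ : ℝ) * (clusterScale r₀ / (clusterScale r₀ + h) * h)) (2 ^ (r₀ : ℝ) * h)) :
    Tendsto (fun h => ratClusterSum.real (I h) / h) (𝓝[>] 0) (𝓝 (2 ^ (r₀ : ℝ))) := by
  have hzero {r : ℚ} (hr : r ≠ r₀) : ∀ᶠ h in 𝓝[>] 0, (ratCluster r).real (I h) / h = 0 := by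
    filter_upwards [eventually_ratCluster_closedBall_eq_zero hr, self_mem_nhdsWithin]
      with h h0 (hh : 0 < h)
    rw [measureReal_def, measure_mono_null (hI h hh) h0, ENNReal.toReal_zero, zero_div]
  have hfin : {r : ℚ | encode r < encode r₀}.Finite :=
    (finite_Iio _).preimage encode_injective.injOn
  simp_rw [measureReal_ratClusterSum, ← tsum_div_const]
  rw [← tsum_ite_eq r₀ (fun _ => (2 : ℝ) ^ (r₀ : ℝ))]
  refine tendsto_tsum_of_dominated_convergence
    (bound := fun r => (if r = r₀ then 2 ^ (r₀ : ℝ) else 0) + 2 * 2⁻¹ ^ encode r)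
    ((hasSum_ite_eq r₀ _).summable.add (((summable_geometric_of_lt_one (by norm_num)
      (by norm_num)).comp_injective encode_injective).mul_left 2)) (fun r => ?_) ?_
  · split_ifs with hr
    · subst hr
      exact tendsto_div_of_mem_Icc (clusterScale_pos r) hI₀
    · exact tendsto_const_nhds.congr' (EventuallyEq.symm (hzero hr))
  -- clusters of rationals enumerated before `r₀` vanish near `r₀`; later ones obey the bound
  -- of `ratCluster_real_closedBall_le`
  filter_upwards [self_mem_nhdsWithin, (eventually_all_finite hfin).2 fun r hr =>
    hzero (r := r) (fun h => (ne_of_lt hr) (congrArg encode h))] with h (hh : 0 < h) hsmall r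
  rw [Real.norm_eq_abs, abs_of_nonneg (by positivity)]
  rcases lt_trichotomy (encode r) (encode r₀) with hlt | heq | hgt
  · rw [hsmall r hlt]
    split_ifs <;> positivity
  · obtain rfl := encode_injective heq
    rw [if_pos rfl, div_le_iff₀ hh, add_mul]
    linarith [(hI₀ h hh).2, show 0 ≤ 2 * 2⁻¹ ^ encode r * h by positivity]
  · rw [if_neg (fun h => hgt.ne (congrArg encode h).symm), zero_add, div_le_iff₀ hh]
    exact (measureReal_mono (hI h hh)).trans (ratCluster_real_closedBall_le hgt hh)

theorem stmt8 :
    ∃ f : ℝ → ℝ, StrictMono f ∧ (∀ q : ℚ, HasDerivAt f ((2 : ℝ) ^ (q : ℝ)) (q : ℝ)) ∧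
      ∀ᵐ x : ℝ ∂MeasureTheory.volume, Irrational x → HasDerivAt f 0 x := by
  refine ⟨fun x => ratClusterSum.real (Iic x), fun x y hxy => ?_, fun r => ?_, ?_⟩
  · have := measureReal_Iic_sub_Iic (μ := ratClusterSum) hxy.le
    linarith [ratClusterSum_real_Ioc_pos hxy]
  · have hc := (two_rpow_pos r).le
    refine hasDerivAt_measureReal_Iic (tendsto_ratClusterSum_slope r (fun h hh => ?_)
      fun h hh => cluster_real_Ioc_right_mem hc (clusterScale_pos r) hh)
      (tendsto_ratClusterSum_slope r (fun h hh => ?_)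
      fun h hh => cluster_real_Ioc_left_mem hc (clusterScale_pos r) hh)
    all_goals
      rw [Real.closedBall_eq_Icc]
      exact Ioc_subset_Icc_self.trans (Icc_subset_Icc (by linarith) (by linarith))
  · filter_upwards [ae_hasDerivAt_measureReal_Iic_of_mutuallySingular
      ratClusterSum_mutuallySingular_volume] with x hx _ using hx
end

section
/- For any bijection φ : ℕ → ℚ, there is at most one real number ξ at which the right derivative of F_φ exists and is finite and nonzero, and at most one real number ξ at which the left derivative of F_φ exists and is finite and nonzero. -/
/-!
Put `μ S = ∑_{n ∈ S} 2⁻ⁿ` for `S ⊆ ℕ`, so that `F_φ y - F_φ x = μ {n | x ≤ φ n < y}`. If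
`2⁻ⁿ < μ S < 2 · 2⁻ⁿ` then `n ∈ S`: an element of `S` below `n` alone carries mass `≥ 2 · 2⁻ⁿ`,
and without an element `≤ n` the mass is at most `∑_{k > n} 2⁻ᵏ = 2⁻ⁿ`. A one-sided derivative
`d ≠ 0` at `ξ` is positive because `F_φ` is monotone, and for large `n` the interval of length
`h = 3 / (2d) · 2⁻ⁿ` adjacent to `ξ` has mass close to `d h = 3/2 · 2⁻ⁿ`. So `φ n` lies in that
interval for all large `n`, hence `φ n → ξ`, which determines `ξ`.
-/

open Filter Set Topology

noncomputable def dyadicMass (S : Set ℕ) : ℝ :=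
  ∑' n, S.indicator (fun n => (2⁻¹ : ℝ) ^ n) n

lemma tendsto_mul_inv_two_pow (c : ℝ) : Tendsto (fun n : ℕ => c * (2⁻¹ : ℝ) ^ n) atTop (𝓝 0) := by
  simpa using (tendsto_pow_atTop_nhds_zero_of_lt_one (by norm_num : (0 : ℝ) ≤ 2⁻¹)
    (by norm_num)).const_mul c

section DyadicMass

variable {S T : Set ℕ}

lemma summable_indicator_inv_two_pow (S : Set ℕ) :
    Summable (S.indicator fun n => (2⁻¹ : ℝ) ^ n) := by
  simpa only [one_div] using summable_geometric_two.indicator S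

lemma dyadicMass_nonneg (S : Set ℕ) : 0 ≤ dyadicMass S :=
  tsum_nonneg fun _ => indicator_nonneg (fun _ _ => by positivity) _

lemma dyadicMass_mono (hST : S ⊆ T) : dyadicMass S ≤ dyadicMass T :=
  (summable_indicator_inv_two_pow S).tsum_le_tsum
    (indicator_le_indicator_of_subset hST fun _ => by positivity)
    (summable_indicator_inv_two_pow T)

lemma inv_two_pow_le_dyadicMass {n : ℕ} (hn : n ∈ S) : (2⁻¹ : ℝ) ^ n ≤ dyadicMass S := by
  have := (summable_indicator_inv_two_pow S).le_tsum n
    fun _ _ => indicator_nonneg (fun _ _ => by positivity) _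
  rwa [indicator_of_mem hn] at this

lemma dyadicMass_le_of_subset_Ici {m : ℕ} (hS : S ⊆ Ici m) :
    dyadicMass S ≤ 2 * (2⁻¹ : ℝ) ^ m := by
  calc dyadicMass S ≤ dyadicMass (Ici m) := dyadicMass_mono hS
    _ = 2 * (2⁻¹ : ℝ) ^ m := by
      rw [← tsum_geometric_inv_two_ge m]
      exact tsum_congr fun n => by simp [indicator]

lemma dyadicMass_union (hST : Disjoint S T) :
    dyadicMass (S ∪ T) = dyadicMass S + dyadicMass T := by
  rw [dyadicMass, indicator_union_of_disjoint hST]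
  exact (summable_indicator_inv_two_pow S).tsum_add (summable_indicator_inv_two_pow T)

lemma mem_of_inv_two_pow_lt_dyadicMass {n : ℕ} (hlow : (2⁻¹ : ℝ) ^ n < dyadicMass S)
    (hup : dyadicMass S < 2 * (2⁻¹ : ℝ) ^ n) : n ∈ S := by
  obtain ⟨k, hkS, hkn⟩ : ∃ k ∈ S, k ≤ n := by
    by_contra! hS
    have := dyadicMass_le_of_subset_Ici (m := n + 1) fun k hk => hS k hk
    rw [pow_succ] at this
    linarith
  have hnk : n ≤ k := by
    by_contra! hkn
    have : (2⁻¹ : ℝ) ^ n ≤ 2⁻¹ ^ (k + 1) := pow_le_pow_of_le_one (by norm_num) (by norm_num) hkn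
    rw [pow_succ] at this
    linarith [inv_two_pow_le_dyadicMass hkS]
  exact le_antisymm hkn hnk ▸ hkS

lemma eventually_mem_of_tendsto_dyadicMass_div {S : ℝ → Set ℕ} {d : ℝ} (hd : d ≠ 0)
    (hS : Tendsto (fun h => dyadicMass (S h) / h) (𝓝[>] 0) (𝓝 d)) :
    ∃ c : ℝ, ∀ᶠ n in atTop, n ∈ S (c * 2⁻¹ ^ n) := by
  have hd₀ : 0 < d := hd.symm.lt_of_le <| ge_of_tendsto hS <| by
    filter_upwards [self_mem_nhdsWithin] with h (hh : 0 < h)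
    exact div_nonneg (dyadicMass_nonneg _) hh.le
  have hseq : Tendsto (fun n : ℕ => 3 / (2 * d) * (2⁻¹ : ℝ) ^ n) atTop (𝓝[>] 0) := by
    refine tendsto_nhdsWithin_iff.2 ⟨tendsto_mul_inv_two_pow _, Eventually.of_forall fun n => ?_⟩
    exact mem_Ioi.2 (by positivity)
  have hbounds : ∀ᶠ h in 𝓝[>] 0, dyadicMass (S h) / h ∈ Ioo (2 * d / 3) (4 * d / 3) :=
    hS (Ioo_mem_nhds (by linarith) (by linarith))
  refine ⟨3 / (2 * d), ?_⟩
  filter_upwards [hseq.eventually hbounds] with n ⟨hlow, hup⟩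
  have hh : 0 < 3 / (2 * d) * (2⁻¹ : ℝ) ^ n := by positivity
  rw [lt_div_iff₀ hh] at hlow
  rw [div_lt_iff₀ hh] at hup
  apply mem_of_inv_two_pow_lt_dyadicMass
  · calc (2⁻¹ : ℝ) ^ n = 2 * d / 3 * (3 / (2 * d) * 2⁻¹ ^ n) := by field_simp
      _ < _ := hlow
  · calc _ < 4 * d / 3 * (3 / (2 * d) * 2⁻¹ ^ n) := hup
      _ = 2 * (2⁻¹ : ℝ) ^ n := by field_simp; ring

end DyadicMass

section Fphi

variable {φ : ℕ → ℚ} {ξ d : ℝ}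

lemma Fphi_eq_dyadicMass (x : ℝ) : Fphi φ x = dyadicMass {n | (φ n : ℝ) < x} :=
  tsum_congr fun n => by simp [indicator]

lemma Fphi_sub_Fphi {x y : ℝ} (hxy : x ≤ y) :
    Fphi φ y - Fphi φ x = dyadicMass {n | x ≤ φ n ∧ (φ n : ℝ) < y} := by
  have hsplit : {n | (φ n : ℝ) < y} = {n | (φ n : ℝ) < x} ∪ {n | x ≤ φ n ∧ (φ n : ℝ) < y} := by
    ext n
    simp only [mem_ofPred_eq, mem_union]
    grind
  have hdisj : Disjoint {n | (φ n : ℝ) < x} {n | x ≤ φ n ∧ (φ n : ℝ) < y} :=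
    disjoint_left.2 fun n hn hn' => (not_lt.2 hn'.1) hn
  rw [Fphi_eq_dyadicMass, Fphi_eq_dyadicMass, hsplit, dyadicMass_union hdisj, add_sub_cancel_left]

lemma tendsto_dyadicMass_div_of_hasDerivWithinAt_Ioi (hF : HasDerivWithinAt (Fphi φ) d (Ioi ξ) ξ) :
    Tendsto (fun h => dyadicMass {n | ξ ≤ φ n ∧ (φ n : ℝ) < ξ + h} / h) (𝓝[>] 0) (𝓝 d) := by
  have hshift : Tendsto (ξ + ·) (𝓝[>] 0) (𝓝[>] ξ) := by
    refine tendsto_nhdsWithin_iff.2 ⟨?_, eventually_nhdsWithin_of_forall fun h hh => ?_⟩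
    · simpa using ((continuous_const_add ξ).tendsto 0).mono_left nhdsWithin_le_nhds
    · exact lt_add_of_pos_right ξ hh
  refine (((hasDerivWithinAt_iff_tendsto_slope' self_notMem_Ioi).1 hF).comp hshift).congr' ?_
  filter_upwards [self_mem_nhdsWithin] with h (hh : 0 < h)
  simp [slope_def_field, Fphi_sub_Fphi (by linarith : ξ ≤ ξ + h)]

lemma tendsto_dyadicMass_div_of_hasDerivWithinAt_Iio (hF : HasDerivWithinAt (Fphi φ) d (Iio ξ) ξ) :
    Tendsto (fun h => dyadicMass {n | ξ - h ≤ φ n ∧ (φ n : ℝ) < ξ} / h) (𝓝[>] 0) (𝓝 d) := by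
  have hshift : Tendsto (ξ - ·) (𝓝[>] 0) (𝓝[<] ξ) := by
    refine tendsto_nhdsWithin_iff.2 ⟨?_, eventually_nhdsWithin_of_forall fun h hh => ?_⟩
    · simpa using ((continuous_sub_left ξ).tendsto 0).mono_left nhdsWithin_le_nhds
    · exact sub_lt_self ξ hh
  refine (((hasDerivWithinAt_iff_tendsto_slope' self_notMem_Iio).1 hF).comp hshift).congr' ?_
  filter_upwards [self_mem_nhdsWithin] with h (hh : 0 < h)
  rw [Function.comp_apply, slope_def_field, ← Fphi_sub_Fphi (by linarith : ξ - h ≤ ξ),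
    sub_sub_cancel_left, div_neg, ← neg_div, neg_sub]

lemma tendsto_of_hasDerivWithinAt_Ioi (hF : HasDerivWithinAt (Fphi φ) d (Ioi ξ) ξ) (hd : d ≠ 0) :
    Tendsto (fun n => (φ n : ℝ)) atTop (𝓝 ξ) := by
  obtain ⟨c, hc⟩ :=
    eventually_mem_of_tendsto_dyadicMass_div hd (tendsto_dyadicMass_div_of_hasDerivWithinAt_Ioi hF)
  have hup : Tendsto (fun n : ℕ => ξ + c * (2⁻¹ : ℝ) ^ n) atTop (𝓝 ξ) := by
    simpa using (tendsto_mul_inv_two_pow c).const_add ξ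
  exact tendsto_of_tendsto_of_tendsto_of_le_of_le' tendsto_const_nhds hup
    (hc.mono fun _ hn => hn.1) (hc.mono fun _ hn => hn.2.le)

lemma tendsto_of_hasDerivWithinAt_Iio (hF : HasDerivWithinAt (Fphi φ) d (Iio ξ) ξ) (hd : d ≠ 0) :
    Tendsto (fun n => (φ n : ℝ)) atTop (𝓝 ξ) := by
  obtain ⟨c, hc⟩ :=
    eventually_mem_of_tendsto_dyadicMass_div hd (tendsto_dyadicMass_div_of_hasDerivWithinAt_Iio hF)
  have hlow : Tendsto (fun n : ℕ => ξ - c * (2⁻¹ : ℝ) ^ n) atTop (𝓝 ξ) := by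
    simpa using (tendsto_mul_inv_two_pow c).const_sub ξ
  exact tendsto_of_tendsto_of_tendsto_of_le_of_le' hlow tendsto_const_nhds
    (hc.mono fun _ hn => hn.1) (hc.mono fun _ hn => hn.2.le)

end Fphi

theorem stmt14_general (φ : ℕ → ℚ) :
    {ξ : ℝ | ∃ d : ℝ, d ≠ 0 ∧ HasDerivWithinAt (Fphi φ) d (Set.Ioi ξ) ξ}.Subsingleton ∧
    {ξ : ℝ | ∃ d : ℝ, d ≠ 0 ∧ HasDerivWithinAt (Fphi φ) d (Set.Iio ξ) ξ}.Subsingleton :=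
  ⟨fun _ ⟨_, hd₁, h₁⟩ _ ⟨_, hd₂, h₂⟩ => tendsto_nhds_unique
      (tendsto_of_hasDerivWithinAt_Ioi h₁ hd₁) (tendsto_of_hasDerivWithinAt_Ioi h₂ hd₂),
    fun _ ⟨_, hd₁, h₁⟩ _ ⟨_, hd₂, h₂⟩ => tendsto_nhds_unique
      (tendsto_of_hasDerivWithinAt_Iio h₁ hd₁) (tendsto_of_hasDerivWithinAt_Iio h₂ hd₂)⟩

theorem stmt14 (φ : ℕ → ℚ) (hφ : Function.Bijective φ) :
    {ξ : ℝ | ∃ d : ℝ, d ≠ 0 ∧ HasDerivWithinAt (Fphi φ) d (Set.Ioi ξ) ξ}.Subsingleton ∧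
    {ξ : ℝ | ∃ d : ℝ, d ≠ 0 ∧ HasDerivWithinAt (Fphi φ) d (Set.Iio ξ) ξ}.Subsingleton :=
  stmt14_general φ
end
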